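/- arXiv:1906.08599 — 5 statements merged into one kernel-verified Lean document; each statement's English description precedes it below -/
import Mathlib

section
/- For a tree T rooted at vertex 0 with vertices 0,1,…,m and values a_i (a_0 = 0), the following identity holds: Σ_{i=1}^m (a_i − a_{μ_i}) · (Σ_{j ∈ T_i} a_j) = Σ_{i=1}^m a_i², where μ_i is the parent of i and T_i is the subtree rooted at i (including i). -/
/-!
Swapping the two sums, the left side becomes `∑ⱼ aⱼ · ∑ᵢ (aᵢ − a_{μ i})`, the inner sum running
over the vertices `i ≠ 0` on the path from `j` to the root. That path is `j, μ j, …, μ^[K-1] j`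
with `K` the first time the iterates of `j` reach the root, so the inner sum telescopes to
`aⱼ − a₀ = aⱼ`.
-/

open Finset

namespace Function

variable {α : Type*} {f : α → α} {r x : α}

theorem iterate_eq_of_isFixedPt_of_le (hr : IsFixedPt f r) {n k : ℕ} (hn : f^[n] x = r)
    (hk : n ≤ k) : f^[k] x = r := by
  rw [← Nat.sub_add_cancel hk, iterate_add_apply, hn, iterate_fixed hr]

theorem injOn_iterate_Iio_of_forall_iterate_ne {n : ℕ} (hn : f^[n] x = r)
    (hmin : ∀ k < n, f^[k] x ≠ r) : Set.InjOn (fun t => f^[t] x) (Set.Iio n) := by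
  intro s hs t ht hst
  by_contra hne
  wlog hlt : s < t generalizing s t
  · exact this ht hs hst.symm (Ne.symm hne) (by omega)
  simp only [Set.mem_Iio] at ht
  simp only at hst
  refine hmin (n - t + s) (by omega) ?_
  rw [iterate_add_apply, hst, ← iterate_add_apply, Nat.sub_add_cancel ht.le, hn]

theorem sum_range_iterate_sub {M : Type*} [AddCommGroup M] (g : α → M) (n : ℕ) :
    ∑ t ∈ range n, (g (f^[t] x) - g (f (f^[t] x))) = g x - g (f^[n] x) := by
  simp only [← iterate_succ_apply' f]
  exact sum_range_sub' (fun t => g (f^[t] x)) n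

variable [Fintype α] [DecidableEq α]

open Classical in
theorem filter_ne_and_exists_iterate_eq (hr : IsFixedPt f r) {n : ℕ} (hn : f^[n] x = r)
    (hmin : ∀ k < n, f^[k] x ≠ r) :
    univ.filter (fun i => i ≠ r ∧ ∃ k, f^[k] x = i) = (range n).image (fun t => f^[t] x) := by
  ext i
  simp only [mem_filter, mem_univ, true_and, mem_image, mem_range]
  constructor
  · rintro ⟨hir, k, rfl⟩
    exact ⟨k, not_le.mp fun hk => hir (iterate_eq_of_isFixedPt_of_le hr hn hk), rfl⟩
  · rintro ⟨t, ht, rfl⟩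
    exact ⟨hmin t ht, t, rfl⟩

open Classical in
theorem sum_filter_exists_iterate_eq_sub {M : Type*} [AddCommGroup M] (hr : IsFixedPt f r)
    (hx : ∃ k, f^[k] x = r) (g : α → M) :
    ∑ i ∈ univ.filter (fun i => i ≠ r ∧ ∃ k, f^[k] x = i), (g i - g (f i)) = g x - g r := by
  have hn := Nat.find_spec hx
  have hmin : ∀ k < Nat.find hx, f^[k] x ≠ r := fun k hk => Nat.find_min hx hk
  have hinj := injOn_iterate_Iio_of_forall_iterate_ne hn hmin
  rw [← coe_range] at hinj
  rw [filter_ne_and_exists_iterate_eq hr hn hmin, sum_image hinj, sum_range_iterate_sub, hn]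

open Classical in
theorem sum_sub_parent_mul_sum_subtree {R : Type*} [CommRing R] (hr : IsFixedPt f r)
    (hroot : ∀ x, ∃ k, f^[k] x = r) (a : α → R) :
    ∑ i ∈ univ.filter (· ≠ r), (a i - a (f i)) * ∑ j ∈ univ.filter (fun j => ∃ k, f^[k] j = i), a j
      = ∑ j, a j * (a j - a r) := by
  simp only [mul_sum]
  rw [sum_comm' (t' := univ) (s' := fun j => univ.filter (fun i => i ≠ r ∧ ∃ k, f^[k] j = i))
    (fun i j => by simp only [mem_filter, mem_univ, true_and, and_true])]
  refine sum_congr rfl fun j _ => ?_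
  rw [← sum_mul, sum_filter_exists_iterate_eq_sub hr (hroot j), mul_comm]

end Function

open Classical in
/-- For a rooted tree on `{0,1,…,m}` with root `0` given by the parent
map `μ` (every vertex reaches the root by iterating `μ`), and values `a` with
`a 0 = 0`, one has `Σ_{i≠0} (a i − a (μ i)) · (Σ_{j ∈ T_i} a j) = Σ_{i≠0} a i ²`,
where `T_i = {j : μ^[k] j = i for some k}` is the subtree rooted at `i`. -/
theorem tree_telescoping_identity {m : ℕ}
    (μ : Fin (m + 1) → Fin (m + 1)) (hμ0 : μ 0 = 0)
    (hroot : ∀ i, ∃ k, μ^[k] i = 0)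
    (a : Fin (m + 1) → ℝ) (ha0 : a 0 = 0) :
    ∑ i ∈ univ.filter (fun i => i ≠ 0),
        (a i - a (μ i)) * (∑ j ∈ univ.filter (fun j => ∃ k, μ^[k] j = i), a j)
      = ∑ i ∈ univ.filter (fun i => i ≠ 0), a i ^ 2 := by
  rw [Function.sum_sub_parent_mul_sum_subtree hμ0 hroot, ha0,
    sum_filter_of_ne fun i _ hi => by rintro rfl; simp [ha0] at hi]
  simp only [sub_zero, sq]
end

section
/- Define the allocation n_{iμ_i} = λ s_{iμ_i} Σ_{j∈T_i} a_j on the edges of a shortest-path tree E (and n_e = 0 otherwise), with λ > 0. Then the vector a = (a_1,…,a_m) of shortest-path distances is an eigenvector of the resulting Fisher information matrix F({n_e}) with eigenvalue λ. -/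
/-!
Row `i` of `F a` is the Laplacian expression `∑ₖ nᵢₖ / sᵢₖ² · (aᵢ - aₖ)` (using `a₀ = 0`). Only
tree edges carry weight, and along them `|aᵢ - aₖ| = sᵢₖ`, so the edge to the parent contributes
`λ Sᵢ` and the edge to each child `k` contributes `-λ Sₖ`, where `S` is the subtree sum. The
subtree sums satisfy `Sᵢ = aᵢ + ∑_{children k} Sₖ`, hence the row equals `λ aᵢ`.
-/

open Finset Matrix

open Classical in
/-- The sum of `a` over the subtree rooted at `i` (parent map `μ`). -/
noncomputable def subtreeSum {m : ℕ} (μ : Fin (m + 1) → Fin (m + 1))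
    (a : Fin (m + 1) → ℝ) (i : Fin (m + 1)) : ℝ :=
  ∑ j ∈ univ.filter (fun j => ∃ k, μ^[k] j = i), a j

section ParentMap

variable {α : Type*} {μ : α → α} {r : α}

theorem iterate_eq_of_iterate_eq_fixedPt (hr : μ r = r) {x : α} {k t : ℕ}
    (h : μ^[k] x = r) (hkt : k ≤ t) : μ^[t] x = r := by
  obtain ⟨d, rfl⟩ := Nat.exists_eq_add_of_le hkt
  rw [add_comm, Function.iterate_add_apply, h, Function.iterate_fixed hr]

theorem not_isPeriodicPt_of_ne_root (hr : μ r = r) (hroot : ∀ x, ∃ k, μ^[k] x = r)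
    {x : α} (hx : x ≠ r) {p : ℕ} (hp : 0 < p) :
    ¬ Function.IsPeriodicPt μ p x := by
  intro hper
  obtain ⟨k, hk⟩ := hroot x
  exact hx ((hper.mul_const k).eq.symm.trans
    (iterate_eq_of_iterate_eq_fixedPt hr hk (Nat.le_mul_of_pos_left k hp)))

theorem apply_ne_self_of_ne_root (hr : μ r = r) (hroot : ∀ x, ∃ k, μ^[k] x = r)
    {x : α} (hx : x ≠ r) : μ x ≠ x := fun h =>
  not_isPeriodicPt_of_ne_root hr hroot hx one_pos h

theorem apply_apply_ne_self_of_ne_root (hr : μ r = r) (hroot : ∀ x, ∃ k, μ^[k] x = r)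
    {x : α} (hx : x ≠ r) : μ (μ x) ≠ x := fun h =>
  not_isPeriodicPt_of_ne_root hr hroot hx two_pos h

theorem iterate_injective_of_ne_root (hr : μ r = r) (hroot : ∀ x, ∃ k, μ^[k] x = r)
    {x y : α} (hy : y ≠ r) {k₁ k₂ : ℕ}
    (h₁ : μ^[k₁] x = y) (h₂ : μ^[k₂] x = y) : k₁ = k₂ := by
  wlog hle : k₁ ≤ k₂ generalizing k₁ k₂
  · exact (this h₂ h₁ (le_of_not_ge hle)).symm
  by_contra hne
  refine not_isPeriodicPt_of_ne_root hr hroot hy (Nat.sub_pos_of_lt (lt_of_le_of_ne hle hne)) ?_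
  calc μ^[k₂ - k₁] y = μ^[k₂ - k₁] (μ^[k₁] x) := by rw [h₁]
    _ = y := by rw [← Function.iterate_add_apply, Nat.sub_add_cancel hle, h₂]

end ParentMap

section Descendants

variable {α : Type*} [Fintype α] {μ : α → α} {r : α}

open Classical in
noncomputable def descendants (μ : α → α) (i : α) : Finset α :=
  univ.filter fun j => ∃ k, μ^[k] j = i

theorem mem_descendants {i j : α} : j ∈ descendants μ i ↔ ∃ k, μ^[k] j = i := by
  simp [descendants]

variable [DecidableEq α]

theorem descendants_eq_insert_biUnion (i : α) :
    descendants μ i = insert i ((univ.filter fun c => μ c = i).biUnion (descendants μ)) := by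
  ext x
  simp only [mem_descendants, mem_insert, mem_biUnion, mem_filter, mem_univ, true_and]
  constructor
  · rintro ⟨_ | k, hk⟩
    · exact Or.inl hk
    · exact Or.inr ⟨μ^[k] x, by rwa [← Function.iterate_succ_apply' μ k x], k, rfl⟩
  · rintro (rfl | ⟨c, rfl, k, hk⟩)
    · exact ⟨0, rfl⟩
    · exact ⟨k + 1, by rw [Function.iterate_succ_apply', hk]⟩

theorem self_notMem_biUnion_descendants (hr : μ r = r) (hroot : ∀ x, ∃ k, μ^[k] x = r)
    {i : α} (hi : i ≠ r) :
    i ∉ (univ.filter fun c => μ c = i).biUnion (descendants μ) := by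
  simp only [mem_biUnion, mem_filter, mem_univ, true_and, mem_descendants, not_exists, not_and]
  rintro c hc k hk
  exact not_isPeriodicPt_of_ne_root hr hroot hi k.succ_pos
    (by rw [Function.IsPeriodicPt, Function.IsFixedPt, Function.iterate_succ_apply', hk, hc])

theorem pairwiseDisjoint_descendants_children (hr : μ r = r) (hroot : ∀ x, ∃ k, μ^[k] x = r)
    {i : α} (hi : i ≠ r) :
    (↑(univ.filter fun c => μ c = i) : Set α).PairwiseDisjoint (descendants μ) := by
  intro c₁ hc₁ c₂ hc₂ hne
  simp only [coe_filter, mem_univ, true_and, Set.mem_ofPred_eq] at hc₁ hc₂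
  refine Finset.disjoint_left.mpr fun x hx₁ hx₂ => hne ?_
  obtain ⟨k₁, hk₁⟩ := mem_descendants.mp hx₁
  obtain ⟨k₂, hk₂⟩ := mem_descendants.mp hx₂
  have hk : k₁ + 1 = k₂ + 1 := iterate_injective_of_ne_root hr hroot hi
    (by rw [Function.iterate_succ_apply', hk₁, hc₁])
    (by rw [Function.iterate_succ_apply', hk₂, hc₂])
  rw [← hk₁, ← hk₂, Nat.succ_injective hk]

theorem sum_descendants_eq_add_sum_children (hr : μ r = r) (hroot : ∀ x, ∃ k, μ^[k] x = r)
    {M : Type*} [AddCommMonoid M] (a : α → M)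
    {i : α} (hi : i ≠ r) :
    ∑ j ∈ descendants μ i, a j = a i + ∑ c ∈ univ.filter (fun c => μ c = i),
      ∑ j ∈ descendants μ c, a j := by
  rw [descendants_eq_insert_biUnion,
    sum_insert (self_notMem_biUnion_descendants hr hroot hi),
    sum_biUnion (pairwiseDisjoint_descendants_children hr hroot hi)]

end Descendants

theorem subtreeSum_eq_add_sum_children {m : ℕ} {μ : Fin (m + 1) → Fin (m + 1)}
    (hμ0 : μ 0 = 0) (hroot : ∀ i, ∃ k, μ^[k] i = 0) (a : Fin (m + 1) → ℝ) {i : Fin (m + 1)}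
    (hi : i ≠ 0) :
    subtreeSum μ a i = a i + ∑ c ∈ univ.filter (fun c => μ c = i), subtreeSum μ a c :=
  sum_descendants_eq_add_sum_children hμ0 hroot a hi

section Allocation

variable {m : ℕ} {s : Fin (m + 1) → Fin (m + 1) → ℝ} {μ : Fin (m + 1) → Fin (m + 1)}
  {a : Fin (m + 1) → ℝ} {lam : ℝ}

noncomputable def treeAllocation (s : Fin (m + 1) → Fin (m + 1) → ℝ)
    (μ : Fin (m + 1) → Fin (m + 1)) (a : Fin (m + 1) → ℝ) (lam : ℝ) (i j : Fin (m + 1)) : ℝ :=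
  if i ≠ 0 ∧ μ i = j then lam * s i j * subtreeSum μ a i
  else if j ≠ 0 ∧ μ j = i then lam * s i j * subtreeSum μ a j
  else 0

theorem treeAllocation_parent {i : Fin (m + 1)} (hi : i ≠ 0) :
    treeAllocation s μ a lam i (μ i) = lam * s i (μ i) * subtreeSum μ a i := by
  simp [treeAllocation, hi]

theorem treeAllocation_child (hμ0 : μ 0 = 0) (hroot : ∀ i, ∃ k, μ^[k] i = 0)
    {i k : Fin (m + 1)} (hi : i ≠ 0) (hk : μ k = i) :
    treeAllocation s μ a lam i k = lam * s i k * subtreeSum μ a k := by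
  have hk0 : k ≠ 0 := by rintro rfl; exact hi (hk ▸ hμ0)
  have hpar : μ i ≠ k := fun h => apply_apply_ne_self_of_ne_root hμ0 hroot hi (by rw [h, hk])
  simp [treeAllocation, hpar, hk0, hk]

theorem treeAllocation_of_not_adj {i k : Fin (m + 1)} (hpar : μ i ≠ k) (hchild : μ k ≠ i) :
    treeAllocation s μ a lam i k = 0 := by
  simp [treeAllocation, hpar, hchild]

theorem treeAllocation_div_sq_mul_sub (hs : ∀ i j, i ≠ j → s i j ≠ 0)
    (hs_symm : ∀ i j, s i j = s j i) (hμ0 : μ 0 = 0) (hroot : ∀ i, ∃ k, μ^[k] i = 0)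
    (ha : ∀ i, i ≠ 0 → a i = a (μ i) + s (μ i) i) {i : Fin (m + 1)} (hi : i ≠ 0)
    (k : Fin (m + 1)) :
    treeAllocation s μ a lam i k / s i k ^ 2 * (a i - a k) =
      (if μ i = k then lam * subtreeSum μ a i else 0) +
        (if μ k = i then -(lam * subtreeSum μ a k) else 0) := by
  by_cases hpar : μ i = k
  · subst hpar
    have hsi : s i (μ i) ≠ 0 := hs _ _ (apply_ne_self_of_ne_root hμ0 hroot hi).symm
    rw [if_pos rfl, if_neg (apply_apply_ne_self_of_ne_root hμ0 hroot hi),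
      treeAllocation_parent hi, ha i hi, hs_symm (μ i) i]
    field_simp
    ring
  by_cases hchild : μ k = i
  · have hk0 : k ≠ 0 := by rintro rfl; exact hi (hchild ▸ hμ0)
    have hsk : s i k ≠ 0 := hs _ _ fun h => apply_ne_self_of_ne_root hμ0 hroot hi (h ▸ hchild)
    rw [if_neg hpar, if_pos hchild, treeAllocation_child hμ0 hroot hi hchild, ha k hk0, hchild]
    field_simp
    ring
  · simp [hpar, hchild, treeAllocation_of_not_adj hpar hchild]

theorem sum_treeAllocation_div_sq_mul_sub (hs : ∀ i j, i ≠ j → s i j ≠ 0)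
    (hs_symm : ∀ i j, s i j = s j i) (hμ0 : μ 0 = 0) (hroot : ∀ i, ∃ k, μ^[k] i = 0)
    (ha : ∀ i, i ≠ 0 → a i = a (μ i) + s (μ i) i) {i : Fin (m + 1)} (hi : i ≠ 0) :
    ∑ k, treeAllocation s μ a lam i k / s i k ^ 2 * (a i - a k) = lam * a i := by
  simp_rw [treeAllocation_div_sq_mul_sub hs hs_symm hμ0 hroot ha hi]
  rw [sum_add_distrib, sum_ite_eq, if_pos (mem_univ _), ← sum_filter, sum_neg_distrib,
    ← mul_sum, subtreeSum_eq_add_sum_children hμ0 hroot a hi]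
  ring

end Allocation

/-- The weighted Laplacian of the complete graph on `Fin (m + 1)` with vertex `0` grounded
(its row and column deleted); row and column `i` belong to vertex `i.succ`. -/
noncomputable def groundedLaplacian {m : ℕ} (w : Fin (m + 1) → Fin (m + 1) → ℝ) :
    Matrix (Fin m) (Fin m) ℝ :=
  Matrix.of fun i j =>
    if i = j then ∑ k ∈ univ.filter (fun k => k ≠ i.succ), w i.succ k else -w i.succ j.succ

theorem groundedLaplacian_mulVec {m : ℕ} (w : Fin (m + 1) → Fin (m + 1) → ℝ)
    {a : Fin (m + 1) → ℝ} (ha0 : a 0 = 0) (i : Fin m) :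
    (groundedLaplacian w *ᵥ fun j => a j.succ) i = ∑ k, w i.succ k * (a i.succ - a k) := by
  have hentry : ∀ j, groundedLaplacian w i j * a j.succ =
      (if i = j then (∑ k, w i.succ k) * a j.succ else 0) - w i.succ j.succ * a j.succ := by
    intro j
    rcases eq_or_ne i j with rfl | hij
    · simp only [groundedLaplacian, of_apply, if_true, filter_ne',
        ← add_sum_erase _ _ (mem_univ i.succ)]
      ring
    · simp [groundedLaplacian, hij]
  simp only [mulVec, dotProduct, hentry, sum_sub_distrib, sum_ite_eq, mem_univ, if_true, mul_sub,
    Fin.sum_univ_succ (f := fun k => w i.succ k * a k), ha0, mul_zero, zero_add, sum_mul]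

theorem tree_allocation_eigenvector_general {m : ℕ}
    (s : Fin (m + 1) → Fin (m + 1) → ℝ)
    (hs : ∀ i j, i ≠ j → 0 < s i j) (hs_symm : ∀ i j, s i j = s j i)
    (μ : Fin (m + 1) → Fin (m + 1)) (hμ0 : μ 0 = 0)
    (hroot : ∀ i, ∃ k, μ^[k] i = 0)
    (a : Fin (m + 1) → ℝ) (ha0 : a 0 = 0)
    (ha : ∀ i, i ≠ 0 → a i = a (μ i) + s (μ i) i)
    (lam : ℝ)
    (n : Fin (m + 1) → Fin (m + 1) → ℝ)
    (hn : n = fun i j =>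
      if i ≠ 0 ∧ μ i = j then lam * s i j * subtreeSum μ a i
      else if j ≠ 0 ∧ μ j = i then lam * s i j * subtreeSum μ a j
      else 0)
    (F : Matrix (Fin m) (Fin m) ℝ)
    (hF : F = Matrix.of fun i j =>
      if i = j then ∑ k ∈ univ.filter (fun k => k ≠ i.succ), n i.succ k / s i.succ k ^ 2
      else -(n i.succ j.succ / s i.succ j.succ ^ 2)) :
    F.mulVec (fun i => a i.succ) = lam • fun i => a i.succ := by
  subst hn hF
  funext i
  exact (groundedLaplacian_mulVec (fun i j => treeAllocation s μ a lam i j / s i j ^ 2)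
      ha0 i).trans
    (sum_treeAllocation_div_sq_mul_sub (fun i j h => (hs i j h).ne') hs_symm hμ0 hroot ha
      i.succ_ne_zero)

/-- Define the allocation `n_{i,μ i} = λ · s_{i,μ i} · Σ_{j∈T_i} a j`
on the edges of a shortest-path tree (and `n_e = 0` otherwise).  Then the vector
`(a 1, …, a m)` of shortest-path distances is an eigenvector of the resulting
Fisher information matrix `F({n_e})` with eigenvalue `λ`. -/
theorem tree_allocation_eigenvector {m : ℕ}
    (s : Fin (m + 1) → Fin (m + 1) → ℝ)
    (hs : ∀ i j, i ≠ j → 0 < s i j) (hs_symm : ∀ i j, s i j = s j i)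
    (μ : Fin (m + 1) → Fin (m + 1)) (hμ0 : μ 0 = 0)
    (hroot : ∀ i, ∃ k, μ^[k] i = 0)
    (a : Fin (m + 1) → ℝ) (ha0 : a 0 = 0)
    (ha : ∀ i, i ≠ 0 → a i = a (μ i) + s (μ i) i)
    (lam : ℝ) (hlam : 0 < lam)
    (n : Fin (m + 1) → Fin (m + 1) → ℝ)
    (hn : n = fun i j =>
      if i ≠ 0 ∧ μ i = j then lam * s i j * subtreeSum μ a i
      else if j ≠ 0 ∧ μ j = i then lam * s i j * subtreeSum μ a j
      else 0)
    (F : Matrix (Fin m) (Fin m) ℝ)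
    (hF : F = Matrix.of fun i j =>
      if i = j then ∑ k ∈ univ.filter (fun k => k ≠ i.succ), n i.succ k / s i.succ k ^ 2
      else -(n i.succ j.succ / s i.succ j.succ ^ 2)) :
    F.mulVec (fun i => a i.succ) = lam • fun i => a i.succ :=
  tree_allocation_eigenvector_general s hs hs_symm μ hμ0 hroot a ha0 ha lam n hn F hF
end

section
/- With the tree allocation n_{iμ_i} = λ s_{iμ_i} Σ_{j∈T_i} a_j, the constraint Σ_e n_e = N forces λ = N / (Σ_{i=1}^m a_i²). -/
open Finset

/-!
Exchanging the two sums, `∑ᵢ (aᵢ - a_{μ i}) ∑_{j ∈ Tᵢ} aⱼ = ∑ⱼ aⱼ ∑_{i ancestor of j} (aᵢ - a_{μ i})`,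
and the inner sum telescopes along the path `j, μ j, μ² j, …` to the root, to `aⱼ - a₀ = aⱼ`.
The path visits no vertex twice because the root is a fixed point of `μ`.
Hence the total allocation is `λ ∑ᵢ aᵢ²`.
-/

namespace Function

open Classical

variable {α : Type*} {f : α → α} {r : α}

theorem not_exists_iterate_apply_eq_self (hr : f r = r) {j : α} {k : ℕ}
    (hj : f^[k] j = r) (hjr : j ≠ r) : ¬ ∃ n, f^[n] (f j) = j := by
  rintro ⟨n, hn⟩
  have hper : IsPeriodicPt f (n + 1) j := hn
  apply hjr
  calc j = f^[(n + 1) * k] j := (hper.mul_const k).eq.symm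
    _ = f^[n * k] (f^[k] j) := by rw [← iterate_add_apply]; ring_nf
    _ = r := by rw [hj, iterate_fixed hr]

variable [Fintype α]

variable (f) in
theorem filter_exists_iterate_eq_insert (j : α) :
    univ.filter (fun i => ∃ k, f^[k] j = i) =
      insert j (univ.filter (fun i => ∃ k, f^[k] (f j) = i)) := by
  ext i
  simp only [mem_filter, mem_univ, true_and, mem_insert]
  constructor
  · rintro ⟨_ | k, rfl⟩
    · exact Or.inl rfl
    · exact Or.inr ⟨k, rfl⟩
  · rintro (rfl | ⟨k, rfl⟩)
    · exact ⟨0, rfl⟩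
    · exact ⟨k + 1, rfl⟩

theorem filter_exists_iterate_eq_singleton (hr : f r = r) :
    univ.filter (fun i => ∃ k, f^[k] r = i) = {r} := by
  ext i
  simp only [mem_filter, mem_univ, true_and, mem_singleton, iterate_fixed hr]
  exact ⟨fun ⟨_, h⟩ => h.symm, fun h => ⟨0, h.symm⟩⟩

theorem sum_filter_exists_iterate_sub {M : Type*} [AddCommGroup M] (g : α → M) (hr : f r = r)
    {k : ℕ} {j : α} (hj : f^[k] j = r) :
    ∑ i ∈ univ.filter (fun i => ∃ k, f^[k] j = i), (g i - g (f i)) = g j - g r := by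
  have hbase : ∑ i ∈ univ.filter (fun i => ∃ k, f^[k] r = i), (g i - g (f i)) = g r - g r := by
    rw [filter_exists_iterate_eq_singleton hr, sum_singleton, hr]
  induction k generalizing j with
  | zero =>
    obtain rfl : j = r := hj
    exact hbase
  | succ k ih =>
    rcases eq_or_ne j r with rfl | hjr
    · exact hbase
    have hj_new : j ∉ univ.filter (fun i => ∃ k, f^[k] (f j) = i) := by
      simpa using not_exists_iterate_apply_eq_self hr hj hjr
    rw [filter_exists_iterate_eq_insert, sum_insert hj_new,
      ih (by rwa [← iterate_succ_apply])]
    abel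

theorem sum_sub_mul_sum_filter_exists_iterate {R : Type*} [CommRing R] (g h : α → R)
    (hr : f r = r) (hroot : ∀ j, ∃ k, f^[k] j = r) :
    ∑ i, (g i - g (f i)) * ∑ j ∈ univ.filter (fun j => ∃ k, f^[k] j = i), h j =
      ∑ j, (g j - g r) * h j := by
  calc ∑ i, (g i - g (f i)) * ∑ j ∈ univ.filter (fun j => ∃ k, f^[k] j = i), h j
      = ∑ j, ∑ i ∈ univ.filter (fun i => ∃ k, f^[k] j = i), (g i - g (f i)) * h j := by
        simp_rw [mul_sum]
        exact sum_comm' (by simp)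
    _ = ∑ j, (g j - g r) * h j := by
        refine sum_congr rfl fun j _ => ?_
        obtain ⟨k, hk⟩ := hroot j
        rw [← sum_mul, sum_filter_exists_iterate_sub g hr hk]

end Function

/-- With the tree allocation `n_{i,μ i} = λ · s_{i,μ i} · Σ_{j∈T_i} a j`
on a shortest-path tree, where `s_{i,μ i} = a i − a (μ i)`, the constraint
`Σ_e n_e = N` forces `λ = N / (Σ_{i=1}^m a i ²)`. -/
theorem tree_allocation_lambda {m : ℕ}
    (μ : Fin (m + 1) → Fin (m + 1)) (hμ0 : μ 0 = 0)
    (hroot : ∀ i, ∃ k, μ^[k] i = 0)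
    (a : Fin (m + 1) → ℝ) (ha0 : a 0 = 0)
    (lam N : ℝ)
    (hA : ∑ i ∈ univ.filter (fun i => i ≠ 0), a i ^ 2 ≠ 0)
    (hN : ∑ i ∈ univ.filter (fun i => i ≠ 0),
        lam * (a i - a (μ i)) * subtreeSum μ a i = N) :
    lam = N / ∑ i ∈ univ.filter (fun i => i ≠ 0), a i ^ 2 := by
  have hedges : ∑ i ∈ univ.filter (fun i => i ≠ 0), (a i - a (μ i)) * subtreeSum μ a i =
      ∑ i, (a i - a (μ i)) * subtreeSum μ a i :=
    sum_filter_of_ne fun i _ h hi => h (by rw [hi, hμ0, sub_self, zero_mul])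
  have hsquares : ∑ i ∈ univ.filter (fun i => i ≠ 0), a i ^ 2 = ∑ i, a i ^ 2 :=
    sum_filter_of_ne fun i _ h hi => h (by rw [hi, ha0, sq, zero_mul])
  have htotal : lam * ∑ i ∈ univ.filter (fun i => i ≠ 0), a i ^ 2 = N := by
    simp_rw [← hN, mul_assoc, ← mul_sum, hedges, hsquares, subtreeSum,
      Function.sum_sub_mul_sum_filter_exists_iterate a a hμ0 hroot, ha0, sub_zero, sq]
  exact eq_div_of_mul_eq hA htotal
end

section
/- Given real numbers n_1 ≤ n_2 ≤ … ≤ n_p with integer sum N, there exists an index k such that rounding up the k smallest values and rounding down the remaining p−k values yields integers summing exactly to N; specifically k = N − Σ_j ⌈n_j⌉ + p works when each n_j is non-integral (and the claim holds with appropriate handling of integer entries). -/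
/-!
Let `S k` (`roundedSum n k` below) be the integer obtained by rounding up the first `k` values and rounding down the
rest. Then `S 0 = Σ ⌊n j⌋ ≤ N ≤ Σ ⌈n j⌉ = S p`, and passing from `S k` to `S (k + 1)` replaces one
floor by the corresponding ceiling, so `S` increases by at most one per step and must hit `N`.
When no `n j` is an integer every step adds exactly one, so `S k = Σ ⌊n j⌋ + k` and the index is
read off: `k = N - Σ ⌊n j⌋ = N - Σ ⌈n j⌉ + p`.
-/

open Finset

theorem Int.exists_eq_of_le_add_one {f : ℕ → ℤ} {N : ℤ} {p : ℕ}
    (hstep : ∀ k < p, f (k + 1) ≤ f k + 1) (h0 : f 0 ≤ N) (hp : N ≤ f p) :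
    ∃ k ≤ p, f k = N := by
  induction p with
  | zero => exact ⟨0, le_rfl, le_antisymm h0 hp⟩
  | succ p ih =>
    by_cases h : N ≤ f p
    · obtain ⟨k, hk, hkN⟩ := ih (fun k hk => hstep k (by omega)) h
      exact ⟨k, by omega, hkN⟩
    · exact ⟨p + 1, le_rfl, by have := hstep p (by omega); omega⟩

theorem sum_floor_le_and_le_sum_ceil {ι R : Type*} [Ring R] [LinearOrder R]
    [IsStrictOrderedRing R] [FloorRing R] (s : Finset ι) (f : ι → R) {N : ℤ}
    (h : ∑ i ∈ s, f i = N) :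
    ∑ i ∈ s, ⌊f i⌋ ≤ N ∧ N ≤ ∑ i ∈ s, ⌈f i⌉ := by
  constructor
  · have : ((∑ i ∈ s, ⌊f i⌋ : ℤ) : R) ≤ N := by
      push_cast
      exact h ▸ sum_le_sum fun i _ => Int.floor_le (f i)
    exact_mod_cast this
  · have : (N : R) ≤ ((∑ i ∈ s, ⌈f i⌉ : ℤ) : R) := by
      push_cast
      exact h ▸ sum_le_sum fun i _ => Int.le_ceil (f i)
    exact_mod_cast this

section RoundedSum

variable {R : Type*} [Ring R] [LinearOrder R] [FloorRing R] {p : ℕ} (n : Fin p → R)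

noncomputable def roundedSum (k : ℕ) : ℤ :=
  ∑ j : Fin p, if (j : ℕ) < k then ⌈n j⌉ else ⌊n j⌋

theorem sum_filter_add_sum_filter_not_eq_roundedSum (k : ℕ) :
    (∑ j ∈ univ.filter (fun j : Fin p => (j : ℕ) < k), ⌈n j⌉)
      + (∑ j ∈ univ.filter (fun j : Fin p => ¬ (j : ℕ) < k), ⌊n j⌋) = roundedSum n k :=
  (sum_ite ..).symm

theorem roundedSum_zero : roundedSum n 0 = ∑ j, ⌊n j⌋ := by
  simp [roundedSum]

theorem roundedSum_of_le {k : ℕ} (hk : p ≤ k) : roundedSum n k = ∑ j, ⌈n j⌉ :=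
  sum_congr rfl fun j _ => if_pos (by omega)

theorem roundedSum_succ {k : ℕ} (hk : k < p) :
    roundedSum n (k + 1) = roundedSum n k + (⌈n ⟨k, hk⟩⌉ - ⌊n ⟨k, hk⟩⌋) := by
  have hterm : ∀ j : Fin p, (if (j : ℕ) < k + 1 then ⌈n j⌉ else ⌊n j⌋)
      = (if (j : ℕ) < k then ⌈n j⌉ else ⌊n j⌋)
        + if j = ⟨k, hk⟩ then ⌈n j⌉ - ⌊n j⌋ else 0 := by
    intro j
    simp only [Fin.ext_iff]
    split_ifs <;> omega
  simp only [roundedSum, hterm, sum_add_distrib, sum_ite_eq', mem_univ, if_true]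

theorem roundedSum_succ_le [IsStrictOrderedRing R] {k : ℕ} (hk : k < p) : roundedSum n (k + 1) ≤ roundedSum n k + 1 := by
  rw [roundedSum_succ n hk]
  linarith [Int.ceil_le_floor_add_one (n ⟨k, hk⟩)]

theorem roundedSum_eq_sum_floor_add (hn : ∀ j, ⌈n j⌉ = ⌊n j⌋ + 1) {k : ℕ} (hk : k ≤ p) :
    roundedSum n k = ∑ j, ⌊n j⌋ + k := by
  induction k with
  | zero => simp [roundedSum_zero]
  | succ k ih =>
    rw [roundedSum_succ n (by omega), ih (by omega), hn]
    push_cast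
    ring

end RoundedSum

theorem rounding_to_integers_general {p : ℕ} (n : Fin p → ℝ)
    (N : ℤ)
    (hsum : ∑ j, n j = (N : ℝ)) :
    (∃ k : ℕ, k ≤ p ∧
      (∑ j ∈ univ.filter (fun j : Fin p => (j : ℕ) < k), ⌈n j⌉)
        + (∑ j ∈ univ.filter (fun j : Fin p => ¬ (j : ℕ) < k), ⌊n j⌋) = N) ∧
    ((∀ j, ¬ ∃ z : ℤ, n j = (z : ℝ)) →
      (∑ j ∈ univ.filter (fun j : Fin p => ((j : ℕ) : ℤ) < N - (∑ j, ⌈n j⌉) + p), ⌈n j⌉)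
        + (∑ j ∈ univ.filter (fun j : Fin p => ¬ ((j : ℕ) : ℤ) < N - (∑ j, ⌈n j⌉) + p), ⌊n j⌋)
        = N) := by
  obtain ⟨hfloor, hceil⟩ := sum_floor_le_and_le_sum_ceil univ n hsum
  refine ⟨?_, fun hfrac => ?_⟩
  · obtain ⟨k, hk, hkN⟩ := Int.exists_eq_of_le_add_one (f := roundedSum n) (N := N) (fun k hk => roundedSum_succ_le n hk)
      (by rwa [roundedSum_zero]) (by rwa [roundedSum_of_le n le_rfl])
    exact ⟨k, hk, by rwa [sum_filter_add_sum_filter_not_eq_roundedSum]⟩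
  · have hn : ∀ j, ⌈n j⌉ = ⌊n j⌋ + 1 := fun j =>
      (Int.ceil_eq_floor_add_one_iff_notMem _).2 fun ⟨z, hz⟩ => hfrac j ⟨z, hz.symm⟩
    have hsum_ceil : ∑ j, ⌈n j⌉ = ∑ j, ⌊n j⌋ + p := by
      rw [← roundedSum_of_le n le_rfl, roundedSum_eq_sum_floor_add n hn le_rfl]
    obtain ⟨m, hm⟩ : ∃ m : ℕ, (m : ℤ) = N - ∑ j, ⌈n j⌉ + p :=
      ⟨_, Int.toNat_of_nonneg (by omega)⟩
    simp only [← hm, Nat.cast_lt]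
    rw [sum_filter_add_sum_filter_not_eq_roundedSum, roundedSum_eq_sum_floor_add n hn (by omega)]
    omega

/-- Given reals `n 0 ≤ n 1 ≤ … ≤ n (p-1)` with integer sum `N`,
there exists `k ≤ p` such that rounding up the `k` smallest values and rounding
down the remaining `p − k` values yields integers summing exactly to `N`;
moreover, when every `n j` is non-integral, `k = N − Σ_j ⌈n j⌉ + p` works. -/
theorem rounding_to_integers {p : ℕ} (n : Fin p → ℝ)
    (hnonneg : ∀ j, 0 ≤ n j) (hmono : Monotone n) (N : ℤ)
    (hsum : ∑ j, n j = (N : ℝ)) :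
    (∃ k : ℕ, k ≤ p ∧
      (∑ j ∈ univ.filter (fun j : Fin p => (j : ℕ) < k), ⌈n j⌉)
        + (∑ j ∈ univ.filter (fun j : Fin p => ¬ (j : ℕ) < k), ⌊n j⌋) = N) ∧
    ((∀ j, ¬ ∃ z : ℤ, n j = (z : ℝ)) →
      (∑ j ∈ univ.filter (fun j : Fin p => ((j : ℕ) : ℤ) < N - (∑ j, ⌈n j⌉) + p), ⌈n j⌉)
        + (∑ j ∈ univ.filter (fun j : Fin p => ¬ ((j : ℕ) : ℤ) < N - (∑ j, ⌈n j⌉) + p), ⌊n j⌋)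
        = N) :=
  rounding_to_integers_general n N hsum
end

section
/- In the constant-relative-error difference network (s_{ij} = s_j − s_i for i < j, with 0 < s_1 ≤ … ≤ s_m), the chain allocation n_1 = λ√m·s_1, n_{i,i+1} = λ√(m−i)·(s_{i+1}−s_i), all other n_e = 0, with λ = N/(Σ_{i=1}^m (√(m+1−i) − √(m−i)) s_i), satisfies Σ_e n_e = N and yields tr(C) = N^{-1} (Σ_{i=1}^m (√(m+1−i) − √(m−i)) s_i)². -/
open Finset Real

/-! Along the chain, the edge `k` lies on the paths to the `m + 1 - k` nodes `k, …, m`, so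
`tr C = ∑ₖ (m + 1 - k) wₖ² / nₖ`. With `nₖ = λ √(m+1-k) wₖ` each term is `√(m+1-k) wₖ / λ`, and
summation by parts turns `∑ₖ √(m+1-k) wₖ` over the increments `wₖ` of `s` into `D`. Hence
`∑ₖ nₖ = λ D = N` and `tr C = D / λ = D² / N`. -/

theorem sum_Icc_mul_increment_by_parts {R : Type*} [CommRing R] (f s w : ℕ → R)
    (hw1 : w 1 = s 1) {m : ℕ} (hm : 1 ≤ m) (hw : ∀ k ∈ Icc 2 m, w k = s k - s (k - 1)) :
    ∑ k ∈ Icc 1 m, f k * w k = ∑ i ∈ Icc 1 m, (f i - f (i + 1)) * s i + f (m + 1) * s m := by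
  induction m, hm using Nat.le_induction with
  | base => simp [hw1]; ring
  | succ m hm ih =>
    have hlast : w (m + 1) = s (m + 1) - s m := hw (m + 1) (mem_Icc.mpr ⟨by omega, le_rfl⟩)
    rw [sum_Icc_succ_top (by omega : 1 ≤ m + 1) (fun k => f k * w k),
      sum_Icc_succ_top (by omega : 1 ≤ m + 1),
      ih fun k hk => hw k (Icc_subset_Icc_right m.le_succ hk), hlast]
    ring

theorem sum_Icc_sum_Icc_eq_sum_mul {R : Type*} [CommRing R] (g : ℕ → R) (m : ℕ) :
    ∑ i ∈ Icc 1 m, ∑ k ∈ Icc 1 i, g k = ∑ k ∈ Icc 1 m, ((m : R) + 1 - k) * g k := by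
  induction m with
  | zero => simp
  | succ m ih =>
    rw [sum_Icc_succ_top (by omega), ih, sum_Icc_succ_top (Nat.le_add_left 1 m),
      sum_Icc_succ_top (Nat.le_add_left 1 m)]
    push_cast
    rw [← add_assoc, ← sum_add_distrib]
    congr 1
    · exact sum_congr rfl fun k _ => by ring
    · ring

theorem sq_div_mul_self {K : Type*} [Field K] (c x : K) : x ^ 2 / (c * x) = x / c := by
  rcases eq_or_ne x 0 with rfl | hx
  · simp
  · rw [sq, mul_comm c, mul_div_mul_left _ _ hx]

theorem sum_sqrt_mul_increment (s w : ℕ → ℝ) (hw1 : w 1 = s 1) {m : ℕ} (hm : 0 < m)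
    (hw : ∀ k ∈ Icc 2 m, w k = s k - s (k - 1)) :
    ∑ k ∈ Icc 1 m, sqrt ((m : ℝ) + 1 - k) * w k =
      ∑ i ∈ Icc 1 m, (sqrt ((m : ℝ) + 1 - i) - sqrt ((m : ℝ) - i)) * s i := by
  rw [sum_Icc_mul_increment_by_parts _ s w hw1 hm hw]
  push_cast
  simp only [add_sub_add_right_eq_sub, sub_self, sqrt_zero, zero_mul, add_zero]

theorem sum_sqrt_sub_sqrt_mul_pos {m : ℕ} (hm : 0 < m) (s : ℕ → ℝ)
    (hs_pos : ∀ i ∈ Icc 1 m, 0 < s i) :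
    0 < ∑ i ∈ Icc 1 m, (sqrt ((m : ℝ) + 1 - i) - sqrt ((m : ℝ) - i)) * s i := by
  refine sum_pos (fun i hi => mul_pos ?_ (hs_pos i hi)) ⟨1, mem_Icc.mpr ⟨le_rfl, hm⟩⟩
  have hi : (i : ℝ) ≤ m := by exact_mod_cast (mem_Icc.mp hi).2
  exact sub_pos.mpr (sqrt_lt_sqrt (by linarith) (by linarith))

theorem chain_allocation_constant_relative_error_general {m : ℕ} (hm : 0 < m)
    (s : ℕ → ℝ) (hs_pos : ∀ i ∈ Finset.Icc 1 m, 0 < s i)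
    (N : ℝ)
    (D : ℝ) (hD : D = ∑ i ∈ Finset.Icc 1 m,
      (sqrt ((m : ℝ) + 1 - i) - sqrt ((m : ℝ) - i)) * s i)
    (lam : ℝ) (hlam : lam = N / D)
    (w : ℕ → ℝ) (hw1 : w 1 = s 1)
    (hw : ∀ k ∈ Finset.Icc 2 m, w k = s k - s (k - 1))
    (n : ℕ → ℝ) (hn : ∀ k ∈ Finset.Icc 1 m, n k = lam * sqrt ((m : ℝ) + 1 - k) * w k) :
    (∑ k ∈ Finset.Icc 1 m, n k = N) ∧
    (∑ i ∈ Finset.Icc 1 m, ∑ k ∈ Finset.Icc 1 i, w k ^ 2 / n k = D ^ 2 / N) := by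
  have hS : ∑ k ∈ Icc 1 m, sqrt ((m : ℝ) + 1 - k) * w k = D :=
    hD ▸ sum_sqrt_mul_increment s w hw1 hm hw
  have hD0 : D ≠ 0 := hD ▸ (sum_sqrt_sub_sqrt_mul_pos hm s hs_pos).ne'
  constructor
  · calc ∑ k ∈ Icc 1 m, n k = lam * ∑ k ∈ Icc 1 m, sqrt ((m : ℝ) + 1 - k) * w k := by
          rw [mul_sum]
          exact sum_congr rfl fun k hk => by rw [hn k hk, mul_assoc]
      _ = N := by rw [hS, hlam, div_mul_cancel₀ _ hD0]
  · have hterm : ∀ k ∈ Icc 1 m,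
        ((m : ℝ) + 1 - k) * (w k ^ 2 / n k) = sqrt ((m : ℝ) + 1 - k) * w k / lam := by
      intro k hk
      have hkm : (k : ℝ) < m + 1 := by exact_mod_cast Nat.lt_succ_of_le (mem_Icc.mp hk).2
      have ha : sqrt ((m : ℝ) + 1 - k) ≠ 0 := (sqrt_pos.mpr (by linarith)).ne'
      set a := sqrt ((m : ℝ) + 1 - k)
      calc ((m : ℝ) + 1 - k) * (w k ^ 2 / n k) = a * a * (w k / (lam * a)) := by
            rw [mul_self_sqrt (by linarith), hn k hk, sq_div_mul_self]
        _ = a * (a * w k) / (a * lam) := by ring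
        _ = a * w k / lam := mul_div_mul_left _ _ ha
    calc ∑ i ∈ Icc 1 m, ∑ k ∈ Icc 1 i, w k ^ 2 / n k
        = ∑ k ∈ Icc 1 m, ((m : ℝ) + 1 - k) * (w k ^ 2 / n k) := sum_Icc_sum_Icc_eq_sum_mul _ m
      _ = D / lam := by rw [sum_congr rfl hterm, ← sum_div, hS]
      _ = D ^ 2 / N := by rw [hlam, div_div_eq_mul_div, sq]

/-- In the constant-relative-error difference network
(`s_{ij} = s j − s i` for `i < j`, with `0 < s 1 ≤ … ≤ s m`), the chain allocation
`n 1 = λ √m · s 1`, `n_{i,i+1} = λ √(m−i) · (s (i+1) − s i)` (all other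
allocations zero), with `λ = N / Σ_{i=1}^m (√(m+1−i) − √(m−i)) s i`, satisfies
`Σ_e n_e = N` and yields `tr C = N⁻¹ (Σ_{i=1}^m (√(m+1−i) − √(m−i)) s i)²`,
where along the chain (a tree) `C i i = Σ_{e ∈ path(0,i)} s_e²/n_e` and the edge
`k ∈ {1,…,m}` of the chain has fluctuation `w 1 = s 1`, `w k = s k − s (k−1)`. -/
theorem chain_allocation_constant_relative_error {m : ℕ} (hm : 0 < m)
    (s : ℕ → ℝ) (hs_pos : ∀ i ∈ Finset.Icc 1 m, 0 < s i)
    (hs_mono : ∀ i ∈ Finset.Icc 1 m, ∀ j ∈ Finset.Icc 1 m, i ≤ j → s i ≤ s j)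
    (N : ℝ) (hN : 0 < N)
    (D : ℝ) (hD : D = ∑ i ∈ Finset.Icc 1 m,
      (sqrt ((m : ℝ) + 1 - i) - sqrt ((m : ℝ) - i)) * s i)
    (lam : ℝ) (hlam : lam = N / D)
    (w : ℕ → ℝ) (hw1 : w 1 = s 1)
    (hw : ∀ k ∈ Finset.Icc 2 m, w k = s k - s (k - 1))
    (n : ℕ → ℝ) (hn : ∀ k ∈ Finset.Icc 1 m, n k = lam * sqrt ((m : ℝ) + 1 - k) * w k) :
    (∑ k ∈ Finset.Icc 1 m, n k = N) ∧
    (∑ i ∈ Finset.Icc 1 m, ∑ k ∈ Finset.Icc 1 i, w k ^ 2 / n k = D ^ 2 / N) :=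
  chain_allocation_constant_relative_error_general hm s hs_pos N D hD lam hlam w hw1 hw n hn
end
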